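/- arXiv:0904.3291 — 4 statements merged into one kernel-verified Lean document; each statement's English description precedes it below -/
import Mathlib

section
/- Let (Λ, B̃) be a compatible pair, so that B̃ᵀΛ = (D | 0) with D an n×n diagonal matrix with positive integer diagonal entries. Then DB is skew-symmetric, where B is the principal part of B̃ (its top n×n submatrix). In particular, the principal part of B̃ is skew-symmetrizable. -/
open Matrix

/-- The principal part of an `m × n` matrix (`m ≥ n`): its top `n × n` submatrix. -/
def principalPart {m n : ℕ} (h : n ≤ m) (B : Matrix (Fin m) (Fin n) ℤ) :
    Matrix (Fin n) (Fin n) ℤ :=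
  fun i j => B (Fin.castLE h i) j

/-- If `(Λ, B̃)` is a compatible pair, i.e. `Λ` is an `m × m` skew-symmetric integer matrix
and `B̃ᵀ Λ = (D | 0)` with `D` an `n × n` diagonal matrix with positive integer diagonal
entries `d_1, …, d_n`, then `DB` is skew-symmetric, where `B` is the principal part of `B̃`.
In particular, the principal part of `B̃` is skew-symmetrizable. -/
theorem compatiblePair_principalPart_skewSymmetrizable {m n : ℕ} (h : n ≤ m)
    (Λ : Matrix (Fin m) (Fin m) ℤ) (B : Matrix (Fin m) (Fin n) ℤ)
    (hΛ : Λᵀ = -Λ) (d : Fin n → ℤ) (hd : ∀ j, 0 < d j)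
    (hcompat : ∀ (j : Fin n) (i : Fin m),
      (Bᵀ * Λ) j i = if (i : ℕ) = (j : ℕ) then d j else 0) :
    (Matrix.diagonal d * principalPart h B)ᵀ = -(Matrix.diagonal d * principalPart h B) := by
  have key : Matrix.diagonal d * principalPart h B = Bᵀ * Λ * B := by
    ext j k
    have : ∀ i : Fin m, ((i : ℕ) = (j : ℕ)) ↔ (i = Fin.castLE h j) := by
      intro i
      constructor
      · intro hi; exact Fin.ext (by simpa using hi)
      · intro hi; subst hi; simp
    conv_rhs => rw [Matrix.mul_apply]
    simp only [hcompat, ite_mul, zero_mul]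
    rw [Finset.sum_congr rfl (fun i _ => by rw [if_congr (this i) rfl rfl]),
      Finset.sum_ite_eq' Finset.univ (Fin.castLE h j) (fun i => d j * B i k)]
    simp [principalPart, Matrix.diagonal_mul]
  rw [key, Matrix.transpose_mul, Matrix.transpose_mul, Matrix.transpose_transpose, hΛ]
  simp [Matrix.mul_assoc]
end

section
/- Let (Λ, B̃) be a compatible pair with B̃ = (b_ij) an m×n integer matrix, and let k ∈ {1,…,n}. For ε ∈ {+1, −1}, let E_ε be the m×m matrix with entries e_ij = δ_ij for j ≠ k, e_kk = −1, and e_ik = max(0, −ε·b_ik) for i ≠ k. Then the matrix Λ' = E_εᵀ Λ E_ε is skew-symmetric and is independent of the choice of sign ε, i.e., E_{+1}ᵀ Λ E_{+1} = E_{−1}ᵀ Λ E_{−1}. -/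
open Matrix

/-- The matrix `E_ε` associated to an `m × n` integer matrix `B̃ = (b_ij)`, an index
`k ∈ [1, n]` and a sign `ε`: its entries are `e_ij = δ_ij` for `j ≠ k`, `e_kk = -1`,
and `e_ik = max(0, -ε b_ik)` for `i ≠ k`. -/
def Emat {m n : ℕ} (h : n ≤ m) (B : Matrix (Fin m) (Fin n) ℤ) (k : Fin n) (ε : ℤ) :
    Matrix (Fin m) (Fin m) ℤ :=
  fun i j =>
    if j = Fin.castLE h k then
      (if i = Fin.castLE h k then -1 else max 0 (-(ε * B i k)))
    else (if i = j then 1 else 0)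

/-- Let `(Λ, B̃)` be a compatible pair (`Λ` skew-symmetric, `B̃ᵀ Λ = (D | 0)` with `D`
diagonal with positive integer diagonal entries) and `k ∈ [1, n]`.  Then for each sign
`ε ∈ {+1, -1}` the matrix `Λ' = E_εᵀ Λ E_ε` is skew-symmetric, and `Λ'` is independent
of the choice of sign: `E_{+1}ᵀ Λ E_{+1} = E_{-1}ᵀ Λ E_{-1}`. -/
theorem Emat_conj_skew_and_sign_independent {m n : ℕ} (h : n ≤ m)
    (Λ : Matrix (Fin m) (Fin m) ℤ) (B : Matrix (Fin m) (Fin n) ℤ)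
    (hΛ : Λᵀ = -Λ) (d : Fin n → ℤ) (hd : ∀ j, 0 < d j)
    (hcompat : ∀ (j : Fin n) (i : Fin m),
      (Bᵀ * Λ) j i = if (i : ℕ) = (j : ℕ) then d j else 0)
    (k : Fin n) :
    (∀ ε : ℤ, ε = 1 ∨ ε = -1 →
        ((Emat h B k ε)ᵀ * Λ * Emat h B k ε)ᵀ = -((Emat h B k ε)ᵀ * Λ * Emat h B k ε)) ∧
      (Emat h B k 1)ᵀ * Λ * Emat h B k 1 = (Emat h B k (-1))ᵀ * Λ * Emat h B k (-1) := by
  have hskew : ∀ ε : ℤ,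
      ((Emat h B k ε)ᵀ * Λ * Emat h B k ε)ᵀ = -((Emat h B k ε)ᵀ * Λ * Emat h B k ε) := by
    intro ε
    rw [Matrix.transpose_mul, Matrix.transpose_mul, Matrix.transpose_transpose, hΛ,
      Matrix.neg_mul, Matrix.mul_neg, Matrix.mul_assoc]
  refine ⟨fun ε _ => hskew ε, ?_⟩
  have hΛs : ∀ p q, Λ p q = -Λ q p := by
    intro p q
    have := congrFun (congrFun hΛ q) p
    simpa using this
  -- compatibility, entrywise
  have hcomp' : ∀ p : Fin m,
      (∑ q, B q k * Λ q p) = if p = Fin.castLE h k then d k else 0 := by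
    intro p
    have h1 := hcompat k p
    rw [Matrix.mul_apply] at h1
    simp only [Matrix.transpose_apply] at h1
    rw [h1]
    by_cases hp : p = Fin.castLE h k
    · rw [if_pos (by simp [hp]), if_pos hp]
    · rw [if_neg (by simpa [Fin.ext_iff] using hp), if_neg hp]
  -- B (castLE k) k = 0
  have hBKk : B (Fin.castLE h k) k = 0 := by
    have hS : (∑ p, ∑ q, B p k * Λ p q * B q k) = 0 := by
      have h2 : (∑ p, ∑ q, B p k * Λ p q * B q k)
          = -∑ p, ∑ q, B p k * Λ p q * B q k := by
        nth_rewrite 2 [Finset.sum_comm]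
        rw [← Finset.sum_neg_distrib]
        refine Finset.sum_congr rfl fun p _ => ?_
        rw [← Finset.sum_neg_distrib]
        refine Finset.sum_congr rfl fun q _ => ?_
        rw [hΛs p q]; ring
      omega
    have h3 : (∑ p, ∑ q, B p k * Λ p q * B q k) = d k * B (Fin.castLE h k) k := by
      rw [Finset.sum_comm]
      have : ∀ q, (∑ p, B p k * Λ p q * B q k)
          = (if q = Fin.castLE h k then d k else 0) * B q k := by
        intro q
        rw [← Finset.sum_mul, hcomp' q]
      simp only [this, ite_mul, zero_mul]
      rw [Finset.sum_ite_eq' Finset.univ (Fin.castLE h k)]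
      simp
    have hdk := hd k
    rw [h3] at hS
    rcases mul_eq_zero.mp hS with h4 | h4
    · omega
    · exact h4
  -- correction matrix
  set C : Matrix (Fin m) (Fin m) ℤ :=
    Matrix.of (fun q j => if j = Fin.castLE h k then
      (if q = Fin.castLE h k then 0 else -B q k) else 0) with hCdef
  have hE1 : Emat h B k 1 = Emat h B k (-1) + C := by
    ext q j
    simp only [Matrix.add_apply, hCdef, Matrix.of_apply, Emat]
    by_cases hj : j = Fin.castLE h k
    · rw [if_pos hj, if_pos hj, if_pos hj]
      by_cases hq : q = Fin.castLE h k
      · rw [if_pos hq, if_pos hq, if_pos hq]; ring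
      · rw [if_neg hq, if_neg hq, if_neg hq]
        simp only [one_mul, neg_mul, neg_neg]
        omega
    · rw [if_neg hj, if_neg hj, if_neg hj]; ring
  -- row sums against C's nonzero column
  have hrow : ∀ p : Fin m,
      (∑ q, Λ p q * C q (Fin.castLE h k)) = if p = Fin.castLE h k then d k else 0 := by
    intro p
    have e : ∀ q : Fin m, Λ p q * C q (Fin.castLE h k)
        = B q k * Λ q p - (if q = Fin.castLE h k then B q k * Λ q p else 0) := by
      intro q
      by_cases hq : q = Fin.castLE h k
      · subst hq; simp [hCdef, hBKk]
      · simp only [hCdef, Matrix.of_apply, if_pos rfl, if_neg hq, if_true]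
        rw [hΛs p q]; ring
    simp only [e]
    rw [Finset.sum_sub_distrib, hcomp' p,
      Finset.sum_ite_eq' Finset.univ (Fin.castLE h k)]
    simp [hBKk]
  have hcol : ∀ q : Fin m,
      (∑ p, C p (Fin.castLE h k) * Λ p q) = if q = Fin.castLE h k then -d k else 0 := by
    intro q
    have e : ∀ p : Fin m, C p (Fin.castLE h k) * Λ p q
        = -(B p k * Λ p q) + (if p = Fin.castLE h k then B p k * Λ p q else 0) := by
      intro p
      by_cases hp : p = Fin.castLE h k
      · subst hp; simp [hCdef, hBKk]
      · simp only [hCdef, Matrix.of_apply, if_pos rfl, if_neg hp, if_true]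
        ring
    simp only [e]
    rw [Finset.sum_add_distrib, Finset.sum_neg_distrib, hcomp' q,
      Finset.sum_ite_eq' Finset.univ (Fin.castLE h k)]
    simp [hBKk]
    split <;> simp
  -- the three product lemmas
  have hΛC : Λ * C = Matrix.of (fun p j =>
      if p = Fin.castLE h k ∧ j = Fin.castLE h k then d k else 0) := by
    ext p j
    rw [Matrix.mul_apply, Matrix.of_apply]
    by_cases hj : j = Fin.castLE h k
    · rw [hj, hrow p]
      by_cases hp : p = Fin.castLE h k <;> simp [hp]
    · have : ∀ q : Fin m, Λ p q * C q j = 0 := by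
        intro q; simp [hCdef, hj]
      simp [this, hj]
  have hCΛ : Cᵀ * Λ = Matrix.of (fun i q =>
      if i = Fin.castLE h k ∧ q = Fin.castLE h k then -d k else 0) := by
    ext i q
    rw [Matrix.mul_apply, Matrix.of_apply]
    simp only [Matrix.transpose_apply]
    by_cases hi : i = Fin.castLE h k
    · rw [hi]
      have := hcol q
      simp only [hCdef, Matrix.of_apply, if_pos rfl] at this ⊢
      rw [this]
      by_cases hq : q = Fin.castLE h k <;> simp [hq]
    · have : ∀ p : Fin m, C p i * Λ p q = 0 := by
        intro p; simp [hCdef, hi]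
      simp [this, hi]
  -- E row at castLE k
  have hEK : ∀ (ε : ℤ) (j : Fin m), Emat h B k ε (Fin.castLE h k) j
      = if j = Fin.castLE h k then -1 else 0 := by
    intro ε j
    simp only [Emat]
    by_cases hj : j = Fin.castLE h k
    · simp [hj]
    · rw [if_neg hj, if_neg hj, if_neg (fun hh : Fin.castLE h k = j => hj hh.symm)]
  have hP1 : (Emat h B k (-1))ᵀ * (Λ * C) = Matrix.of (fun i j =>
      if i = Fin.castLE h k ∧ j = Fin.castLE h k then -d k else 0) := by
    ext i j
    rw [Matrix.mul_apply, hΛC, Matrix.of_apply]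
    simp only [Matrix.transpose_apply, Matrix.of_apply]
    rw [Finset.sum_eq_single (Fin.castLE h k)]
    · rw [hEK]
      by_cases hi : i = Fin.castLE h k <;> by_cases hj : j = Fin.castLE h k <;>
        simp [hi, hj]
    · intro b _ hb
      simp [hb]
    · simp
  have hP2 : (Cᵀ * Λ) * Emat h B k (-1) = Matrix.of (fun i j =>
      if i = Fin.castLE h k ∧ j = Fin.castLE h k then d k else 0) := by
    ext i j
    rw [hCΛ, Matrix.mul_apply, Matrix.of_apply]
    rw [Finset.sum_eq_single (Fin.castLE h k)]
    · rw [hEK]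
      by_cases hi : i = Fin.castLE h k <;> by_cases hj : j = Fin.castLE h k <;>
        simp [hi, hj]
    · intro b _ hb
      simp [Matrix.of_apply, hb]
    · simp
  have hP3 : Cᵀ * (Λ * C) = 0 := by
    ext i j
    rw [Matrix.mul_apply, hΛC]
    simp only [Matrix.transpose_apply, Matrix.of_apply, Matrix.zero_apply, mul_ite, mul_zero]
    refine Finset.sum_eq_zero fun p _ => ?_
    by_cases hp : p = Fin.castLE h k
    · subst hp; simp [hCdef]
    · simp [hp]
  -- assemble
  rw [hE1, Matrix.transpose_add, Matrix.add_mul, Matrix.add_mul, Matrix.mul_add,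
    Matrix.mul_add, Matrix.mul_assoc ((Emat h B k (-1))ᵀ) Λ C, hP1, hP2,
    Matrix.mul_assoc (Cᵀ) Λ C, hP3]
  ext i j
  simp only [Matrix.add_apply, Matrix.of_apply, Matrix.zero_apply]
  split <;> ring
end

section
/- Let (Λ, B̃) be a compatible pair with B̃ᵀΛ = (D | 0), let k ∈ {1,…,n}, let ε ∈ {+1, −1}, let E_ε be the m×m matrix with entries e_ij = δ_ij for j ≠ k, e_kk = −1, and e_ik = max(0, −ε·b_ik) for i ≠ k, and set Λ' = E_εᵀ Λ E_ε. Then the pair (Λ', μ_k(B̃)) is compatible with the same diagonal matrix D, i.e., μ_k(B̃)ᵀ Λ' = (D | 0). -/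
open Matrix

/-- Matrix mutation of an `m × n` integer matrix in direction `k ∈ [1, n]`. -/
def matrixMutation {m n : ℕ} (h : n ≤ m) (B : Matrix (Fin m) (Fin n) ℤ) (k : Fin n) :
    Matrix (Fin m) (Fin n) ℤ :=
  fun i j =>
    if i = Fin.castLE h k ∨ j = k then -B i j
    else B i j + Int.sign (B i k) * max (B i k * B (Fin.castLE h k) j) 0

/-- The companion `n × n` matrix `F_ε`. -/
def Fmat {m n : ℕ} (h : n ≤ m) (B : Matrix (Fin m) (Fin n) ℤ) (k : Fin n) (ε : ℤ) :
    Matrix (Fin n) (Fin n) ℤ :=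
  fun q j =>
    if q = k then (if j = k then -1 else max 0 (ε * B (Fin.castLE h k) j))
    else (if q = j then 1 else 0)

set_option maxHeartbeats 1000000 in
private lemma sign_identity (a b ε : ℤ) (hε : ε = 1 ∨ ε = -1) :
    max 0 (-(ε * a)) * b + a * max 0 (ε * b) = a.sign * max (a * b) 0 := by
  rcases hε with rfl | rfl <;>
    rcases lt_trichotomy a 0 with ha | rfl | ha <;>
    rcases lt_trichotomy b 0 with hb | rfl | hb <;>
    simp_all [Int.sign_eq_one_of_pos, Int.sign_eq_neg_one_of_neg, max_def] <;>
    split_ifs <;> nlinarith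

private lemma Emat_mul_Emat {m n : ℕ} (h : n ≤ m) (B : Matrix (Fin m) (Fin n) ℤ)
    (k : Fin n) (ε : ℤ) : Emat h B k ε * Emat h B k ε = 1 := by
  ext i j
  rw [Matrix.mul_apply]
  by_cases hj : j = Fin.castLE h k
  · subst hj
    by_cases hi : i = Fin.castLE h k
    · subst hi
      have key : ∀ p : Fin m,
          Emat h B k ε (Fin.castLE h k) p * Emat h B k ε p (Fin.castLE h k)
            = if p = Fin.castLE h k then 1 else 0 := by
        intro p
        by_cases hp : p = Fin.castLE h k
        · subst hp; simp [Emat]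
        · simp [Emat, hp, Ne.symm hp]
      rw [Finset.sum_congr rfl fun p _ => key p, Finset.sum_ite_eq']
      simp [Matrix.one_apply]
    · have key : ∀ p : Fin m,
          Emat h B k ε i p * Emat h B k ε p (Fin.castLE h k)
            = (if p = Fin.castLE h k then -(max 0 (-(ε * B i k))) else 0)
              + (if p = i then max 0 (-(ε * B i k)) else 0) := by
        intro p
        by_cases hp : p = Fin.castLE h k
        · subst hp
          simp [Emat, hi, Ne.symm hi]
        · by_cases hpi : p = i
          · subst hpi
            simp [Emat, hp]
          · simp [Emat, hp, hpi, Ne.symm hpi]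
      rw [Finset.sum_congr rfl fun p _ => key p, Finset.sum_add_distrib,
        Finset.sum_ite_eq', Finset.sum_ite_eq']
      simp [Matrix.one_apply, hi]
  · have key : ∀ p : Fin m,
        Emat h B k ε i p * Emat h B k ε p j
          = if p = j then Emat h B k ε i j else 0 := by
      intro p
      by_cases hp : p = j
      · subst hp; simp [Emat, hj]
      · simp [Emat, hj, hp]
    rw [Finset.sum_congr rfl fun p _ => key p, Finset.sum_ite_eq']
    simp [Emat, Matrix.one_apply, hj]

private lemma mut_eq {m n : ℕ} (h : n ≤ m) (B : Matrix (Fin m) (Fin n) ℤ)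
    (k : Fin n) (ε : ℤ) (hε : ε = 1 ∨ ε = -1) (hkk : B (Fin.castLE h k) k = 0) :
    matrixMutation h B k = Emat h B k ε * B * Fmat h B k ε := by
  have hEB : ∀ (i : Fin m) (j' : Fin n), (Emat h B k ε * B) i j' =
      if i = Fin.castLE h k then -B (Fin.castLE h k) j'
      else B i j' + max 0 (-(ε * B i k)) * B (Fin.castLE h k) j' := by
    intro i j'
    rw [Matrix.mul_apply]
    by_cases hi : i = Fin.castLE h k
    · subst hi
      have key : ∀ p : Fin m, Emat h B k ε (Fin.castLE h k) p * B p j'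
          = if p = Fin.castLE h k then -B (Fin.castLE h k) j' else 0 := by
        intro p
        by_cases hp : p = Fin.castLE h k
        · subst hp; simp [Emat]
        · simp [Emat, hp, Ne.symm hp]
      rw [Finset.sum_congr rfl fun p _ => key p, Finset.sum_ite_eq']
      simp
    · have key : ∀ p : Fin m, Emat h B k ε i p * B p j'
          = (if p = Fin.castLE h k then max 0 (-(ε * B i k)) * B (Fin.castLE h k) j' else 0)
            + (if p = i then B i j' else 0) := by
        intro p
        by_cases hp : p = Fin.castLE h k
        · subst hp; simp [Emat, hi, Ne.symm hi]
        · by_cases hpi : p = i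
          · subst hpi; simp [Emat, hp]
          · simp [Emat, hp, hpi, Ne.symm hpi]
      rw [Finset.sum_congr rfl fun p _ => key p, Finset.sum_add_distrib,
        Finset.sum_ite_eq', Finset.sum_ite_eq']
      simp [hi, add_comm]
  ext i j
  rw [Matrix.mul_apply]
  by_cases hjk : j = k
  · have key : ∀ q : Fin n, (Emat h B k ε * B) i q * Fmat h B k ε q j
        = if q = k then -((Emat h B k ε * B) i k) else 0 := by
      intro q
      by_cases hq : q = k
      · rw [hq]; simp [Fmat, hjk]
      · simp [Fmat, hq, hjk]
    rw [Finset.sum_congr rfl fun q _ => key q, Finset.sum_ite_eq']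
    simp only [Finset.mem_univ, if_true, hEB]
    by_cases hi : i = Fin.castLE h k
    · simp [matrixMutation, hi, hjk, hkk]
    · simp [matrixMutation, hi, hjk, hkk]
  · have key : ∀ q : Fin n, (Emat h B k ε * B) i q * Fmat h B k ε q j
        = (if q = k then (Emat h B k ε * B) i k * max 0 (ε * B (Fin.castLE h k) j) else 0)
          + (if q = j then (Emat h B k ε * B) i j else 0) := by
      intro q
      by_cases hq : q = k
      · rw [hq]; simp [Fmat, hjk, Ne.symm hjk]
      · by_cases hqj : q = j
        · rw [hqj]; simp [Fmat, hjk]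
        · simp [Fmat, hq, hqj]
    rw [Finset.sum_congr rfl fun q _ => key q, Finset.sum_add_distrib,
      Finset.sum_ite_eq', Finset.sum_ite_eq']
    simp only [Finset.mem_univ, if_true, hEB]
    by_cases hi : i = Fin.castLE h k
    · simp [matrixMutation, hi, hjk, hkk]
    · simp only [matrixMutation, hi, hjk, if_false, false_or, hkk, mul_zero, add_zero]
      have := sign_identity (B i k) (B (Fin.castLE h k) j) ε hε
      linarith [this]

/-- Let `(Λ, B̃)` be a compatible pair with `B̃ᵀ Λ = (D | 0)`, let `k ∈ [1, n]`,
`ε ∈ {+1, -1}`, and set `Λ' = E_εᵀ Λ E_ε`.  Then the pair `(Λ', μ_k(B̃))` is compatible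
with the same diagonal matrix `D`, i.e. `μ_k(B̃)ᵀ Λ' = (D | 0)`. -/
theorem matrixMutation_Emat_compatible {m n : ℕ} (h : n ≤ m)
    (Λ : Matrix (Fin m) (Fin m) ℤ) (B : Matrix (Fin m) (Fin n) ℤ)
    (hΛ : Λᵀ = -Λ) (d : Fin n → ℤ) (hd : ∀ j, 0 < d j)
    (hcompat : ∀ (j : Fin n) (i : Fin m),
      (Bᵀ * Λ) j i = if (i : ℕ) = (j : ℕ) then d j else 0)
    (k : Fin n) (ε : ℤ) (hε : ε = 1 ∨ ε = -1) :
    ∀ (j : Fin n) (i : Fin m),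
      ((matrixMutation h B k)ᵀ * ((Emat h B k ε)ᵀ * Λ * Emat h B k ε)) j i =
        if (i : ℕ) = (j : ℕ) then d j else 0 := by
  have hcast : ∀ (i : Fin m) (a : Fin n), i = Fin.castLE h a ↔ (i : ℕ) = (a : ℕ) := by
    intro i a
    constructor
    · rintro rfl; rfl
    · intro hv; exact Fin.ext (by simpa using hv)
  have hskew : ∀ p q : Fin m, Λ p q = -Λ q p := by
    intro p q
    have := congrFun (congrFun hΛ q) p
    simpa [Matrix.transpose_apply] using this
  -- skew-symmetrizability of the principal part
  have h1 : ∀ (a b : Fin n), d a * B (Fin.castLE h a) b = ∑ p, ∑ q, B q a * Λ q p * B p b := by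
    intro a b
    have key : ∀ p : Fin m, (Bᵀ * Λ) a p * B p b
        = if p = Fin.castLE h a then d a * B p b else 0 := by
      intro p
      rw [hcompat a p]
      by_cases hp : p = Fin.castLE h a
      · rw [if_pos ((hcast p a).mp hp), if_pos hp]
      · rw [if_neg (fun hc => hp ((hcast p a).mpr hc)), if_neg hp, zero_mul]
    have e1 : d a * B (Fin.castLE h a) b
        = ∑ p, (if p = Fin.castLE h a then d a * B p b else 0) := by
      rw [Finset.sum_ite_eq']; simp
    rw [e1, ← Finset.sum_congr rfl fun p _ => key p]
    apply Finset.sum_congr rfl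
    intro p _
    rw [Matrix.mul_apply, Finset.sum_mul]
    apply Finset.sum_congr rfl
    intro q _
    simp [Matrix.transpose_apply]
  have hM : ∀ (a b : Fin n), d a * B (Fin.castLE h a) b = -(d b * B (Fin.castLE h b) a) := by
    intro a b
    rw [h1 a b, h1 b a]
    have e2 : ∑ p, ∑ q, B q a * Λ q p * B p b = ∑ p, ∑ q, -(B p b * Λ p q * B q a) := by
      apply Finset.sum_congr rfl; intro p _
      apply Finset.sum_congr rfl; intro q _
      rw [hskew q p]; ring
    rw [e2, Finset.sum_comm, ← Finset.sum_neg_distrib]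
    apply Finset.sum_congr rfl; intro p _
    rw [← Finset.sum_neg_distrib]
  have hkk : B (Fin.castLE h k) k = 0 := by
    have h2 := hM k k
    have h3 : d k * B (Fin.castLE h k) k = 0 := by linarith
    rcases mul_eq_zero.mp h3 with h4 | h4
    · exact absurd h4 (hd k).ne'
    · exact h4
  -- matrix algebra reduction
  have hE2 : (Emat h B k ε)ᵀ * (Emat h B k ε)ᵀ = 1 := by
    rw [← Matrix.transpose_mul, Emat_mul_Emat, Matrix.transpose_one]
  have keyalg : (matrixMutation h B k)ᵀ * ((Emat h B k ε)ᵀ * Λ * Emat h B k ε)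
      = (Fmat h B k ε)ᵀ * ((Bᵀ * Λ) * Emat h B k ε) := by
    rw [mut_eq h B k ε hε hkk]
    simp only [Matrix.transpose_mul, Matrix.mul_assoc]
    congr 1
    congr 1
    rw [← Matrix.mul_assoc ((Emat h B k ε)ᵀ) ((Emat h B k ε)ᵀ), hE2, Matrix.one_mul]
  intro j i
  rw [keyalg, Matrix.mul_apply]
  have hGE : ∀ q : Fin n, ((Bᵀ * Λ) * Emat h B k ε) q i
      = d q * Emat h B k ε (Fin.castLE h q) i := by
    intro q
    rw [Matrix.mul_apply]
    have key : ∀ p : Fin m, (Bᵀ * Λ) q p * Emat h B k ε p i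
        = if p = Fin.castLE h q then d q * Emat h B k ε p i else 0 := by
      intro p
      rw [hcompat q p]
      by_cases hp : p = Fin.castLE h q
      · rw [if_pos ((hcast p q).mp hp), if_pos hp]
      · rw [if_neg (fun hc => hp ((hcast p q).mpr hc)), if_neg hp, zero_mul]
    rw [Finset.sum_congr rfl fun p _ => key p, Finset.sum_ite_eq']
    simp
  by_cases hjk : j = k
  · have key : ∀ q : Fin n,
        (Fmat h B k ε)ᵀ j q * ((Bᵀ * Λ) * Emat h B k ε) q i
          = if q = k then -(d k * Emat h B k ε (Fin.castLE h k) i) else 0 := by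
      intro q
      rw [Matrix.transpose_apply, hGE q]
      by_cases hq : q = k
      · rw [hq]; simp [Fmat, hjk]
      · simp [Fmat, hq, hjk]
    rw [Finset.sum_congr rfl fun q _ => key q, Finset.sum_ite_eq']
    simp only [Finset.mem_univ, if_true]
    by_cases hik : i = Fin.castLE h k
    · rw [hik, hjk]
      simp [Emat]
    · rw [hjk, if_neg (fun hc => hik ((hcast i k).mpr hc))]
      simp [Emat, hik, Ne.symm hik]
  · have key : ∀ q : Fin n,
        (Fmat h B k ε)ᵀ j q * ((Bᵀ * Λ) * Emat h B k ε) q i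
          = (if q = k then
              max 0 (ε * B (Fin.castLE h k) j) * (d k * Emat h B k ε (Fin.castLE h k) i)
             else 0)
            + (if q = j then d j * Emat h B k ε (Fin.castLE h j) i else 0) := by
      intro q
      rw [Matrix.transpose_apply, hGE q]
      by_cases hq : q = k
      · rw [hq]; simp [Fmat, hjk, Ne.symm hjk]
      · by_cases hqj : q = j
        · rw [hqj]; simp [Fmat, hjk]
        · simp [Fmat, hq, hqj]
    rw [Finset.sum_congr rfl fun q _ => key q, Finset.sum_add_distrib,
      Finset.sum_ite_eq', Finset.sum_ite_eq']
    simp only [Finset.mem_univ, if_true]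
    by_cases hik : i = Fin.castLE h k
    · have hij : ¬ (i : ℕ) = (j : ℕ) := by
        intro hc
        exact hjk (Fin.ext (by rw [← ((hcast i k).mp hik), hc]))
      rw [if_neg hij, hik]
      have hjj : ¬ (Fin.castLE h j = Fin.castLE h k) :=
        fun hc => hjk (Fin.castLE_injective h hc)
      have e3 : Emat h B k ε (Fin.castLE h k) (Fin.castLE h k) = -1 := by simp [Emat]
      have e4 : Emat h B k ε (Fin.castLE h j) (Fin.castLE h k)
          = max 0 (-(ε * B (Fin.castLE h j) k)) := by simp [Emat, hjj, hjk]
      rw [e3, e4]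
      have hmax : d j * max 0 (-(ε * B (Fin.castLE h j) k))
          = d k * max 0 (ε * B (Fin.castLE h k) j) := by
        have hMjk := hM j k
        rw [mul_max_of_nonneg _ _ (hd j).le, mul_max_of_nonneg _ _ (hd k).le]
        congr 1
        · ring
        · rw [show d j * -(ε * B (Fin.castLE h j) k) = ε * -(d j * B (Fin.castLE h j) k) by ring,
            hMjk]
          ring
      linear_combination hmax
    · have hki : ¬ (Fin.castLE h k = i) := Ne.symm hik
      by_cases hij : i = Fin.castLE h j
      · rw [if_pos ((hcast i j).mp hij), hij]
        have hjknec : ¬ (Fin.castLE h j = Fin.castLE h k) :=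
          fun hc => hjk (Fin.castLE_injective h hc)
        simp [Emat, hjknec, Ne.symm hjk, hjk]
      · rw [if_neg (fun hc => hij ((hcast i j).mpr hc))]
        simp [Emat, hik, Ne.symm hik, hij, Ne.symm hij]
end

section
/- Let B̃ = (b_ij) be an m×n integer matrix (m ≥ n) with b_kk = 0 for a fixed k ∈ {1,…,n}, and let B̃' = μ_k(B̃). Let E be the m×m matrix with entries e_ij = δ_ij for j ≠ k, e_kk = −1, and e_ik = max(0, b_ik) for i ≠ k. Denoting by b̃_j and b̃'_j the jth columns of B̃ and B̃' respectively, one has E·b̃'_j = b̃_j + max(0, −b_kj)·b̃_k for every j ∈ {1,…,n} with j ≠ k, and E·b̃'_k = −b̃_k. -/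
open Matrix

/-!
`E` is the identity outside column `k`, so `E v` is `v` with its `k`-th entry replaced by `0`,
plus `v_k` times the `k`-th column of `E`. On the mutated columns this reduces everything to the
integer identity `sgn a · max (a c) 0 = max 0 (-c) · a + max 0 a · c`, and `b_kk = 0` kills the
contribution of the `k`-th column.
-/

theorem Matrix.updateCol_one_mulVec {ι R : Type*} [Fintype ι] [DecidableEq ι] [CommSemiring R]
    (p : ι) (d v : ι → R) :
    updateCol 1 p d *ᵥ v = Function.update v p 0 + v p • d := by
  ext i
  rw [mulVec, dotProduct, ← Finset.add_sum_erase _ _ (Finset.mem_univ p)]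
  simp only [updateCol_self, Pi.add_apply, Pi.smul_apply, smul_eq_mul]
  rw [Finset.sum_congr rfl fun j hj => by rw [updateCol_ne (Finset.ne_of_mem_erase hj)]]
  by_cases hi : i = p
  · subst hi
    simp [one_apply, mul_comm]
  · simp [one_apply, Finset.sum_ite_eq, hi]
    ring

theorem Int.sign_mul_max_mul_zero (a c : ℤ) :
    a.sign * max (a * c) 0 = max 0 (-c) * a + max 0 a * c := by
  rcases lt_trichotomy a 0 with ha | rfl | ha
  · rw [Int.sign_eq_neg_one_of_neg ha]
    simp only [max_def]
    split_ifs <;> nlinarith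
  · simp
  · rw [Int.sign_eq_one_of_pos ha]
    simp only [max_def]
    split_ifs <;> nlinarith

section matrixMutation

variable {m n : ℕ} (h : n ≤ m) (B : Matrix (Fin m) (Fin n) ℤ) (k : Fin n)

theorem matrixMutation_apply_col_self (i : Fin m) : matrixMutation h B k i k = -B i k := by
  simp [matrixMutation]

theorem matrixMutation_apply_row_self (j : Fin n) :
    matrixMutation h B k (Fin.castLE h k) j = -B (Fin.castLE h k) j := by
  simp [matrixMutation]

theorem matrixMutation_apply_of_ne {i : Fin m} {j : Fin n} (hi : i ≠ Fin.castLE h k)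
    (hj : j ≠ k) :
    matrixMutation h B k i j = B i j + (B i k).sign * max (B i k * B (Fin.castLE h k) j) 0 := by
  simp [matrixMutation, hi, hj]

end matrixMutation

/-- Let `B̃ = (b_ij)` be an `m × n` integer matrix (`m ≥ n`) with `b_kk = 0` for a fixed
`k ∈ [1, n]`, and let `B̃' = μ_k(B̃)`.  Let `E` be the `m × m` matrix with entries
`e_ij = δ_ij` for `j ≠ k`, `e_kk = −1`, and `e_ik = max(0, b_ik)` for `i ≠ k`.
Denoting by `b̃_j` (resp. `b̃'_j`) the `j`th column of `B̃` (resp. `B̃'`), one has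
`E b̃'_j = b̃_j + max(0, −b_kj) b̃_k` for every `j ≠ k`, and `E b̃'_k = −b̃_k`. -/
theorem Emat_mulVec_mutated_columns {m n : ℕ} (h : n ≤ m)
    (B : Matrix (Fin m) (Fin n) ℤ) (k : Fin n)
    (hkk : B (Fin.castLE h k) k = 0)
    (E : Matrix (Fin m) (Fin m) ℤ)
    (hE : ∀ i j : Fin m, E i j =
      if j = Fin.castLE h k then
        (if i = Fin.castLE h k then -1 else max 0 (B i k))
      else (if i = j then 1 else 0)) :
    (∀ j : Fin n, j ≠ k →
        E.mulVec (fun i => matrixMutation h B k i j) =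
          (fun i => B i j) + max 0 (-(B (Fin.castLE h k) j)) • (fun i => B i k)) ∧
      E.mulVec (fun i => matrixMutation h B k i k) = -(fun i => B i k) := by
  have hE_eq : E = updateCol 1 (Fin.castLE h k)
      (Function.update (fun i => max 0 (B i k)) (Fin.castLE h k) (-1)) := by
    ext i j
    rw [hE, updateCol_apply, one_apply]
    split_ifs <;> simp_all
  refine ⟨fun j hj => ?_, ?_⟩
  · ext i
    rw [hE_eq, updateCol_one_mulVec, matrixMutation_apply_row_self]
    by_cases hi : i = Fin.castLE h k
    · simp [hi, hkk]
    · simp only [Pi.add_apply, Pi.smul_apply, smul_eq_mul, Function.update_of_ne hi,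
        matrixMutation_apply_of_ne h B k hi hj, Int.sign_mul_max_mul_zero]
      ring
  · ext i
    simp only [hE_eq, updateCol_one_mulVec, matrixMutation_apply_col_self]
    by_cases hi : i = Fin.castLE h k <;> simp [hi, hkk]
end
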